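/- arXiv:2106.16149 — 2 statements merged into one kernel-verified Lean document; each statement's English description precedes it below -/
import Mathlib

section
/- Let H ∈ (0,1/2) and θ ∈ (0,1). Set θ_n = ⌊Δ_n^{-θ}⌋ for a sequence Δ_n ↓ 0, and let g(t) = K_H^{-1} t^{H-1/2} for t > 0 (0 otherwise), with increments Δ_i g(s) = g(iΔ_n - s) - g((i-1)Δ_n - s). Then there is a constant C depending only on H such that for all n, all i > θ_n and all r ∈ ℕ: ∫_{-∞}^{(i-θ_n)Δ_n} Δ_i g(s) Δ_{i+r} g(s) ds ≤ C Δ_n^{2H} Δ_n^{2θ(1-H)}. -/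
/-!
Substituting `s = (i-1)Δ - Δt` and using `g(Δt) = Δ^{H-1/2} g(t)` turns the integral into
`K⁻² Δ^{2H} ∫_{θ_n-1}^∞ D(t) D(t+r) dt`, where `D(t) = g(t+1) - g(t)` for `K = 1`.
By the mean value theorem `-D(t)` lies between `(1/2-H)(t+1)^{H-3/2}` and `(1/2-H) t^{H-3/2}`
for `t > 0`, so `D` is nonpositive and increasing there and `D(t) D(t+r) ≤ D(t)²`; for
`-1 < t ≤ 0` the product is `≤ 0`. As `D(t)² ≤ t^{2H-1}` near `0` and `∫_y^∞ D² = O(y^{2H-2})`,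
the integral is `O((θ_n+1)^{2H-2})`, and `θ_n + 1 > Δ^{-θ}` makes this `O(Δ^{2θ(1-H)})`.
-/

open MeasureTheory

/-- The fractional kernel `g(t) = K⁻¹ t^{H-1/2}` for `t > 0`, and `0` for `t ≤ 0`. -/
noncomputable def fracKernel (H K t : ℝ) : ℝ :=
  if 0 < t then K⁻¹ * t ^ (H - 1/2) else 0

open Set Real

noncomputable def fracKernelIncr (H t : ℝ) : ℝ :=
  fracKernel H 1 (t + 1) - fracKernel H 1 t

theorem Real.rpow_sub_rpow_add_one_mem_Icc {p t : ℝ} (hp : p ≤ 0) (ht : 0 < t) :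
    t ^ p - (t + 1) ^ p ∈ Icc (-p * (t + 1) ^ (p - 1)) (-p * t ^ (p - 1)) := by
  obtain ⟨c, ⟨htc, hct⟩, hc⟩ := exists_hasDerivAt_eq_slope (fun x => x ^ p)
    (fun x => p * x ^ (p - 1)) (lt_add_one t)
    (fun x hx => (continuousAt_rpow_const x p (Or.inl (ht.trans_le hx.1).ne')).continuousWithinAt)
    (fun x hx => hasDerivAt_rpow_const (Or.inl (ht.trans hx.1).ne'))
  rw [add_sub_cancel_left, div_one] at hc
  have hc_lower := mul_le_mul_of_nonneg_left
    (rpow_le_rpow_of_nonpos (ht.trans htc) hct.le (by linarith : p - 1 ≤ 0)) (neg_nonneg.2 hp)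
  have hc_upper := mul_le_mul_of_nonneg_left
    (rpow_le_rpow_of_nonpos ht htc.le (by linarith : p - 1 ≤ 0)) (neg_nonneg.2 hp)
  constructor <;> linarith

theorem setIntegral_Iio_comp_sub_left {E : Type*} [NormedAddCommGroup E] [NormedSpace ℝ E]
    (f : ℝ → E) (c m : ℝ) : ∫ s in Iio m, f (c - s) = ∫ u in Ioi (c - m), f u := by
  have hpre : (fun s => c - s) ⁻¹' Ioi (c - m) = Iio m := by ext s; simp
  rw [← hpre]
  exact (Measure.measurePreserving_sub_left volume c).setIntegral_preimage_emb
    (MeasurableEquiv.subLeft c).measurableEmbedding f _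

section

variable {H : ℝ}

theorem measurable_fracKernel (K : ℝ) : Measurable (fracKernel H K) :=
  Measurable.ite (measurableSet_lt measurable_const measurable_id)
    (measurable_const.mul (measurable_id.pow_const _)) measurable_const

theorem fracKernel_mul {δ : ℝ} (K : ℝ) (hδ : 0 < δ) (t : ℝ) :
    fracKernel H K (δ * t) = K⁻¹ * δ ^ (H - 1/2) * fracKernel H 1 t := by
  by_cases ht : 0 < t
  · simp only [fracKernel, if_pos ht, if_pos (mul_pos hδ ht), mul_rpow hδ.le ht.le]
    ring
  · simp [fracKernel, ht, mul_pos_iff_of_pos_left hδ]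

theorem fracKernel_mul_add_one_sub {δ : ℝ} (K : ℝ) (hδ : 0 < δ) (t : ℝ) :
    fracKernel H K (δ * (t + 1)) - fracKernel H K (δ * t) =
      K⁻¹ * δ ^ (H - 1/2) * fracKernelIncr H t := by
  rw [fracKernel_mul K hδ, fracKernel_mul K hδ, fracKernelIncr]
  ring

theorem measurable_fracKernelIncr : Measurable (fracKernelIncr H) :=
  ((measurable_fracKernel 1).comp (measurable_id.add_const 1)).sub (measurable_fracKernel 1)

theorem fracKernelIncr_of_pos {t : ℝ} (ht : 0 < t) :
    fracKernelIncr H t = (t + 1) ^ (H - 1/2) - t ^ (H - 1/2) := by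
  simp [fracKernelIncr, fracKernel, ht, ht.trans (lt_add_one t)]

theorem fracKernelIncr_nonneg_of_nonpos {t : ℝ} (ht : t ≤ 0) : 0 ≤ fracKernelIncr H t := by
  unfold fracKernelIncr fracKernel
  rw [if_neg ht.not_gt, sub_zero]
  split_ifs with h
  · simpa using rpow_nonneg h.le _
  · exact le_rfl

theorem neg_fracKernelIncr_mem_Icc (hH : H ≤ 1/2) {t : ℝ} (ht : 0 < t) :
    -fracKernelIncr H t ∈ Icc ((1/2 - H) * (t + 1) ^ (H - 3/2)) ((1/2 - H) * t ^ (H - 3/2)) := by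
  rw [fracKernelIncr_of_pos ht, neg_sub, show H - 3/2 = H - 1/2 - 1 by ring,
    show 1/2 - H = -(H - 1/2) by ring]
  exact rpow_sub_rpow_add_one_mem_Icc (by linarith) ht

theorem fracKernelIncr_nonpos (hH : H ≤ 1/2) {t : ℝ} (ht : 0 < t) : fracKernelIncr H t ≤ 0 := by
  have h := (neg_fracKernelIncr_mem_Icc hH ht).1
  have : 0 ≤ (1/2 - H) * (t + 1) ^ (H - 3/2) :=
    mul_nonneg (by linarith) (rpow_nonneg (by linarith) _)
  linarith

theorem fracKernelIncr_le_add (hH : H ≤ 1/2) {t r : ℝ} (ht : 0 < t) (hr : 1 ≤ r) :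
    fracKernelIncr H t ≤ fracKernelIncr H (t + r) := by
  have hpow : (t + r) ^ (H - 3/2) ≤ (t + 1) ^ (H - 3/2) :=
    rpow_le_rpow_of_nonpos (by linarith) (by linarith) (by linarith)
  have := mul_le_mul_of_nonneg_left hpow (by linarith : 0 ≤ 1/2 - H)
  linarith [(neg_fracKernelIncr_mem_Icc hH ht).1,
    (neg_fracKernelIncr_mem_Icc hH (by linarith : 0 < t + r)).2]

theorem fracKernelIncr_mul_le_indicator_sq (hH : H ≤ 1/2) {t r : ℝ} (ht : -1 < t) (hr : 1 ≤ r) :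
    fracKernelIncr H t * fracKernelIncr H (t + r) ≤
      (Ioi 0).indicator (fun t => fracKernelIncr H t ^ 2) t := by
  rcases le_or_gt t 0 with ht0 | ht0
  · rw [indicator_of_notMem (by simpa using ht0)]
    exact mul_nonpos_of_nonneg_of_nonpos (fracKernelIncr_nonneg_of_nonpos ht0)
      (fracKernelIncr_nonpos hH (by linarith))
  · rw [indicator_of_mem (mem_Ioi.2 ht0), sq]
    exact mul_le_mul_of_nonpos_left (fracKernelIncr_le_add hH ht0 hr)
      (fracKernelIncr_nonpos hH ht0)

theorem fracKernelIncr_sq_le_rpow (hH : H ≤ 1/2) {t : ℝ} (ht : 0 < t) :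
    fracKernelIncr H t ^ 2 ≤ t ^ (2 * H - 1) := by
  have hupper : -fracKernelIncr H t ≤ t ^ (H - 1/2) := by
    rw [fracKernelIncr_of_pos ht]
    linarith [rpow_nonneg (by linarith : 0 ≤ t + 1) (H - 1/2)]
  calc fracKernelIncr H t ^ 2 = (-fracKernelIncr H t) ^ 2 := (neg_sq _).symm
    _ ≤ (t ^ (H - 1/2)) ^ 2 :=
      pow_le_pow_left₀ (neg_nonneg.2 (fracKernelIncr_nonpos hH ht)) hupper 2
    _ = t ^ (2 * H - 1) := by rw [← rpow_two, ← rpow_mul ht.le]; ring_nf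

theorem fracKernelIncr_sq_le_mul_rpow (hH : H ≤ 1/2) {t : ℝ} (ht : 0 < t) :
    fracKernelIncr H t ^ 2 ≤ (1/2 - H) ^ 2 * t ^ (2 * H - 3) := by
  calc fracKernelIncr H t ^ 2 = (-fracKernelIncr H t) ^ 2 := (neg_sq _).symm
    _ ≤ ((1/2 - H) * t ^ (H - 3/2)) ^ 2 :=
      pow_le_pow_left₀ (neg_nonneg.2 (fracKernelIncr_nonpos hH ht))
        (neg_fracKernelIncr_mem_Icc hH ht).2 2
    _ = (1/2 - H) ^ 2 * t ^ (2 * H - 3) := by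
      rw [mul_pow, ← rpow_two (t ^ _), ← rpow_mul ht.le]; ring_nf

theorem integrableOn_Ioi_fracKernelIncr_sq (hH : H ≤ 1/2) {y : ℝ} (hy : 0 < y) :
    IntegrableOn (fun t => fracKernelIncr H t ^ 2) (Ioi y) :=
  ((integrableOn_Ioi_rpow_of_lt (by linarith : 2 * H - 3 < -1) hy).const_mul _).mono'
    (measurable_fracKernelIncr.pow_const 2).aestronglyMeasurable
    ((ae_restrict_iff' measurableSet_Ioi).2 (ae_of_all _ fun t ht => by
      rw [norm_of_nonneg (sq_nonneg _)]
      exact fracKernelIncr_sq_le_mul_rpow hH (hy.trans ht)))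

theorem integrableOn_fracKernelIncr_sq (hH0 : 0 < H) (hH : H ≤ 1/2) :
    IntegrableOn (fun t => fracKernelIncr H t ^ 2) (Ioi 0) := by
  rw [← Ioc_union_Ioi_eq_Ioi zero_le_one]
  refine IntegrableOn.union ?_ (integrableOn_Ioi_fracKernelIncr_sq hH one_pos)
  exact (intervalIntegral.intervalIntegrable_rpow' (by linarith : -1 < 2 * H - 1)).1.mono'
    (measurable_fracKernelIncr.pow_const 2).aestronglyMeasurable
    ((ae_restrict_iff' measurableSet_Ioc).2 (ae_of_all _ fun t ht => by
      rw [norm_of_nonneg (sq_nonneg _)]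
      exact fracKernelIncr_sq_le_rpow hH ht.1))

theorem setIntegral_Ioi_fracKernelIncr_sq_le (hH : H ≤ 1/2) {y : ℝ} (hy : 0 < y) :
    ∫ t in Ioi y, fracKernelIncr H t ^ 2 ≤ (1/2 - H) ^ 2 / (2 - 2 * H) * y ^ (2 * H - 2) := by
  have hexp : 2 * H - 3 < -1 := by linarith
  calc ∫ t in Ioi y, fracKernelIncr H t ^ 2 ≤ ∫ t in Ioi y, (1/2 - H) ^ 2 * t ^ (2 * H - 3) :=
        setIntegral_mono_on (integrableOn_Ioi_fracKernelIncr_sq hH hy)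
          ((integrableOn_Ioi_rpow_of_lt hexp hy).const_mul _) measurableSet_Ioi
          fun t ht => fracKernelIncr_sq_le_mul_rpow hH (hy.trans ht)
    _ = (1/2 - H) ^ 2 / (2 - 2 * H) * y ^ (2 * H - 2) := by
      rw [integral_const_mul, integral_Ioi_rpow_of_lt hexp hy,
        show 2 * H - 3 + 1 = 2 * H - 2 by ring, show 2 - 2 * H = -(2 * H - 2) by ring, div_neg]
      ring

theorem setIntegral_fracKernelIncr_mul_le (hH0 : 0 < H) (hH : H ≤ 1/2) {x r : ℝ} (hx : -1 ≤ x)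
    (hr : 1 ≤ r) :
    ∫ t in Ioi x, fracKernelIncr H t * fracKernelIncr H (t + r) ≤
      ∫ t in Ioi (max x 0), fracKernelIncr H t ^ 2 := by
  rw [← Ioi_inter_Ioi, ← setIntegral_indicator measurableSet_Ioi]
  by_cases hint : IntegrableOn (fun t => fracKernelIncr H t * fracKernelIncr H (t + r)) (Ioi x)
  · exact setIntegral_mono_on hint
      ((integrableOn_fracKernelIncr_sq hH0 hH).integrable_indicator measurableSet_Ioi).integrableOn
      measurableSet_Ioi fun t ht => fracKernelIncr_mul_le_indicator_sq hH (hx.trans_lt ht) hr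
  · rw [integral_undef hint]
    exact setIntegral_nonneg measurableSet_Ioi fun t _ =>
      indicator_nonneg (fun _ _ => sq_nonneg _) t

theorem exists_setIntegral_fracKernelIncr_mul_le (hH0 : 0 < H) (hH : H ≤ 1/2) :
    ∃ C, 0 ≤ C ∧ ∀ x : ℝ, 0 ≤ x → ∀ r : ℝ, 1 ≤ r →
      ∫ t in Ioi (x - 1), fracKernelIncr H t * fracKernelIncr H (t + r) ≤
        C * (x + 1) ^ (2 * H - 2) := by
  set M := ∫ t in Ioi 0, fracKernelIncr H t ^ 2
  set c := (1/2 - H) ^ 2 / (2 - 2 * H)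
  have hM : 0 ≤ M := setIntegral_nonneg measurableSet_Ioi fun t _ => sq_nonneg _
  have hc : 0 ≤ c := div_nonneg (sq_nonneg _) (by linarith)
  refine ⟨3 ^ (2 - 2 * H) * (M + c), by positivity, fun x hx r hr => ?_⟩
  have hx3 : 0 < (x + 1) / 3 := by positivity
  have hscale : 3 ^ (2 - 2 * H) * (M + c) * (x + 1) ^ (2 * H - 2) =
      (M + c) * ((x + 1) / 3) ^ (2 * H - 2) := by
    rw [div_rpow (by linarith) (by norm_num), show 2 - 2 * H = -(2 * H - 2) by ring,
      rpow_neg (by norm_num)]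
    ring
  rw [hscale]
  refine (setIntegral_fracKernelIncr_mul_le hH0 hH (by linarith) hr).trans ?_
  rcases le_or_gt x 2 with hx2 | hx2
  · calc ∫ t in Ioi (max (x - 1) 0), fracKernelIncr H t ^ 2 ≤ M :=
          setIntegral_mono_set (integrableOn_fracKernelIncr_sq hH0 hH)
            (ae_of_all _ fun t => sq_nonneg _) (Ioi_subset_Ioi (le_max_right _ _)).eventuallyLE
      _ ≤ (M + c) * ((x + 1) / 3) ^ (2 * H - 2) := by
        have := one_le_rpow_of_pos_of_le_one_of_nonpos hx3 (by linarith)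
          (by linarith : 2 * H - 2 ≤ 0)
        nlinarith
  · rw [max_eq_left (by linarith)]
    calc ∫ t in Ioi (x - 1), fracKernelIncr H t ^ 2 ≤ c * (x - 1) ^ (2 * H - 2) :=
          setIntegral_Ioi_fracKernelIncr_sq_le hH (by linarith)
      _ ≤ (M + c) * ((x + 1) / 3) ^ (2 * H - 2) :=
          mul_le_mul (by linarith) (rpow_le_rpow_of_nonpos hx3 (by linarith) (by linarith))
            (rpow_nonneg (by linarith) _) (by linarith)

theorem setIntegral_fracKernel_increments_eq (K : ℝ) {δ : ℝ} (hδ : 0 < δ) (i a r : ℝ) :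
    ∫ s in Iio ((i - a) * δ), (fracKernel H K (i * δ - s) - fracKernel H K ((i - 1) * δ - s)) *
        (fracKernel H K ((i + r) * δ - s) - fracKernel H K ((i + r - 1) * δ - s)) =
      K⁻¹ ^ 2 * δ ^ (2 * H) *
        ∫ t in Ioi (a - 1), fracKernelIncr H t * fracKernelIncr H (t + r) := by
  set F : ℝ → ℝ := fun s => (fracKernel H K (i * δ - s) - fracKernel H K ((i - 1) * δ - s)) *
    (fracKernel H K ((i + r) * δ - s) - fracKernel H K ((i + r - 1) * δ - s))
  have hF : ∀ t, F ((i - 1) * δ - δ * t) =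
      K⁻¹ ^ 2 * δ ^ (2 * H - 1) * (fracKernelIncr H t * fracKernelIncr H (t + r)) := by
    intro t
    simp only [F]
    rw [show i * δ - ((i - 1) * δ - δ * t) = δ * (t + 1) by ring,
      show (i - 1) * δ - ((i - 1) * δ - δ * t) = δ * t by ring,
      show (i + r) * δ - ((i - 1) * δ - δ * t) = δ * (t + r + 1) by ring,
      show (i + r - 1) * δ - ((i - 1) * δ - δ * t) = δ * (t + r) by ring,
      fracKernel_mul_add_one_sub K hδ, fracKernel_mul_add_one_sub K hδ,
      show 2 * H - 1 = (H - 1/2) + (H - 1/2) by ring, rpow_add hδ]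
    ring
  have hsub := setIntegral_Iio_comp_sub_left (fun u => F ((i - 1) * δ - u)) ((i - 1) * δ)
    ((i - a) * δ)
  simp only [sub_sub_cancel] at hsub
  rw [hsub, show (i - 1) * δ - (i - a) * δ = δ * (a - 1) by ring,
    ← integral_comp_mul_left_Ioi' _ _ hδ, smul_eq_mul]
  have hδpow : δ * δ ^ (2 * H - 1) = δ ^ (2 * H) := by
    rw [mul_comm, ← rpow_add_one hδ.ne']; ring_nf
  simp only [hF, integral_const_mul, ← hδpow]
  ring

end

theorem fracKernel_truncation_general (H θ : ℝ) (hH : 0 < H ∧ H < 1/2)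
    (K : ℝ)
    (Δ : ℕ → ℝ) (hΔpos : ∀ n, 0 < Δ n) :
    ∃ C > (0:ℝ), ∀ n i r : ℕ, ⌊(Δ n) ^ (-θ)⌋₊ < i → 1 ≤ r →
      (∫ s in Set.Iio (((i:ℝ) - (⌊(Δ n) ^ (-θ)⌋₊ : ℝ)) * Δ n),
          (fracKernel H K ((i:ℝ) * Δ n - s) - fracKernel H K (((i:ℝ) - 1) * Δ n - s)) *
          (fracKernel H K (((i:ℝ) + (r:ℝ)) * Δ n - s)
            - fracKernel H K ((((i:ℝ) + (r:ℝ)) - 1) * Δ n - s)))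
        ≤ C * (Δ n) ^ (2 * H) * (Δ n) ^ (2 * θ * (1 - H)) := by
  obtain ⟨C, hC, hbound⟩ := exists_setIntegral_fracKernelIncr_mul_le hH.1 hH.2.le
  refine ⟨K⁻¹ ^ 2 * C + 1, by positivity, fun n i r _ hr => ?_⟩
  have hδ := hΔpos n
  set a := ⌊Δ n ^ (-θ)⌋₊
  have hfloor : ((a : ℝ) + 1) ^ (2 * H - 2) ≤ Δ n ^ (2 * θ * (1 - H)) :=
    calc ((a : ℝ) + 1) ^ (2 * H - 2) ≤ (Δ n ^ (-θ)) ^ (2 * H - 2) :=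
          rpow_le_rpow_of_nonpos (by positivity) (Nat.lt_floor_add_one _).le (by linarith)
      _ = Δ n ^ (2 * θ * (1 - H)) := by rw [← rpow_mul hδ.le]; ring_nf
  have hpow : 0 < Δ n ^ (2 * H) * Δ n ^ (2 * θ * (1 - H)) := by positivity
  rw [setIntegral_fracKernel_increments_eq K hδ]
  calc K⁻¹ ^ 2 * Δ n ^ (2 * H) *
        ∫ t in Ioi ((a : ℝ) - 1), fracKernelIncr H t * fracKernelIncr H (t + r)
      ≤ K⁻¹ ^ 2 * Δ n ^ (2 * H) * (C * Δ n ^ (2 * θ * (1 - H))) := by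
        gcongr
        exact (hbound a a.cast_nonneg r (by exact_mod_cast hr)).trans (by gcongr)
    _ ≤ (K⁻¹ ^ 2 * C + 1) * Δ n ^ (2 * H) * Δ n ^ (2 * θ * (1 - H)) := by nlinarith

/-- Truncation estimate: with `θ_n = ⌊Δ_n^{-θ}⌋`, for all `n`, `i > θ_n` and `r ≥ 1`,
`∫_{-∞}^{(i-θ_n)Δ_n} Δ_i g(s) Δ_{i+r} g(s) ds ≤ C Δ_n^{2H} Δ_n^{2θ(1-H)}`. -/
theorem fracKernel_truncation (H θ : ℝ) (hH : 0 < H ∧ H < 1/2) (hθ : 0 < θ ∧ θ < 1)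
    (K : ℝ)
    (hK : K = Real.sqrt (2 * H * Real.sin (Real.pi * H) * Real.Gamma (2 * H))
            / Real.Gamma (H + 1/2))
    (Δ : ℕ → ℝ) (hΔpos : ∀ n, 0 < Δ n) (hΔanti : Antitone Δ)
    (hΔ0 : Filter.Tendsto Δ Filter.atTop (nhds 0)) :
    ∃ C > (0:ℝ), ∀ n i r : ℕ, ⌊(Δ n) ^ (-θ)⌋₊ < i → 1 ≤ r →
      (∫ s in Set.Iio (((i:ℝ) - (⌊(Δ n) ^ (-θ)⌋₊ : ℝ)) * Δ n),
          (fracKernel H K ((i:ℝ) * Δ n - s) - fracKernel H K (((i:ℝ) - 1) * Δ n - s)) *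
          (fracKernel H K (((i:ℝ) + (r:ℝ)) * Δ n - s)
            - fracKernel H K ((((i:ℝ) + (r:ℝ)) - 1) * Δ n - s)))
        ≤ C * (Δ n) ^ (2 * H) * (Δ n) ^ (2 * θ * (1 - H)) :=
  fracKernel_truncation_general H θ hH K Δ hΔpos
end

section
/- Let H ∈ (0,1/2) and Z be a mean-zero second-order stationary process whose increment variance satisfies γ(t) = E[(Z_{s+t} - Z_s)^2] ∼ t^{2H} L(t) as t → 0 for a slowly varying function L continuous on (0,∞). Then for every fixed r ≥ 1, the correlation of increments over lag r converges: Corr(Z_{(i+1)Δ} - Z_{iΔ}, Z_{(i+r+1)Δ} - Z_{(i+r)Δ}) → Γ^H_r = ((r+1)^{2H} - 2r^{2H} + (r-1)^{2H})/2 as Δ → 0. -/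
open MeasureTheory Filter

private lemma aux_scale {a : ℝ} (ha : 0 < a) :
    Tendsto (fun Δ : ℝ => a * Δ) (nhdsWithin 0 (Set.Ioi 0)) (nhdsWithin 0 (Set.Ioi 0)) := by
  apply tendsto_nhdsWithin_of_tendsto_nhds_of_eventually_within
  · have : Tendsto (fun Δ : ℝ => a * Δ) (nhds 0) (nhds (a * 0)) :=
      (continuous_const.mul continuous_id).tendsto 0
    rw [mul_zero] at this
    exact this.mono_left nhdsWithin_le_nhds
  · exact eventually_mem_nhdsWithin.mono fun x hx => Set.mem_Ioi.mpr (mul_pos ha hx)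

private lemma aux_ne {γ L : ℝ → ℝ} {H : ℝ}
    (hasymp : Tendsto (fun t => γ t / (t ^ (2 * H) * L t))
      (nhdsWithin 0 (Set.Ioi 0)) (nhds 1)) :
    ∀ᶠ t in nhdsWithin (0:ℝ) (Set.Ioi 0), γ t ≠ 0 ∧ L t ≠ 0 ∧ 0 < t := by
  have hfpos : ∀ᶠ t in nhdsWithin (0:ℝ) (Set.Ioi 0),
      0 < γ t / (t ^ (2 * H) * L t) := hasymp.eventually (eventually_gt_nhds one_pos)
  filter_upwards [hfpos, self_mem_nhdsWithin] with t hf ht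
  refine ⟨?_, ?_, ht⟩
  · intro h; rw [h] at hf; simp at hf
  · intro h; rw [h] at hf; simp at hf

private lemma aux_ratio {γ L : ℝ → ℝ} {H : ℝ} (h2H : 0 < 2 * H)
    (hLslow : ∀ a : ℝ, 0 < a →
      Tendsto (fun t => L (a * t) / L t) (nhdsWithin 0 (Set.Ioi 0)) (nhds 1))
    (hasymp : Tendsto (fun t => γ t / (t ^ (2 * H) * L t))
      (nhdsWithin 0 (Set.Ioi 0)) (nhds 1))
    {a : ℝ} (ha : 0 < a) :
    Tendsto (fun Δ => γ (a * Δ) / γ Δ) (nhdsWithin 0 (Set.Ioi 0)) (nhds (a ^ (2 * H))) := by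
  have h1 : Tendsto (fun Δ : ℝ => γ (a * Δ) / ((a * Δ) ^ (2 * H) * L (a * Δ)))
      (nhdsWithin 0 (Set.Ioi 0)) (nhds 1) := hasymp.comp (aux_scale ha)
  have hmain : Tendsto (fun Δ : ℝ =>
      (γ (a * Δ) / ((a * Δ) ^ (2 * H) * L (a * Δ))) / (γ Δ / (Δ ^ (2 * H) * L Δ)) *
        (a ^ (2 * H) * (L (a * Δ) / L Δ)))
      (nhdsWithin 0 (Set.Ioi 0)) (nhds ((1 / 1) * (a ^ (2 * H) * 1))) :=
    (h1.div hasymp one_ne_zero).mul (tendsto_const_nhds.mul (hLslow a ha))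
  rw [show (1 / 1) * (a ^ (2 * H) * 1) = a ^ (2 * H) by norm_num] at hmain
  apply hmain.congr'
  filter_upwards [aux_ne hasymp, (aux_scale ha).eventually (aux_ne hasymp)] with Δ hΔ haΔ
  obtain ⟨hγΔ, hLΔ, hΔpos⟩ := hΔ
  obtain ⟨hγa, hLa, _⟩ := haΔ
  have hp : (0:ℝ) < Δ ^ (2 * H) := Real.rpow_pos_of_pos hΔpos _
  have hq : (0:ℝ) < a ^ (2 * H) := Real.rpow_pos_of_pos ha _
  rw [Real.mul_rpow ha.le hΔpos.le]
  field_simp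

/-- If `Z` is a mean-zero second-order stationary process whose increment variance
satisfies `γ(t) ∼ t^{2H} L(t)` as `t → 0` with `L` slowly varying at `0` and continuous on
`(0,∞)`, then for every fixed lag `r ≥ 1` the correlation of increments at sampling mesh `Δ`
converges to `Γ^H_r` as `Δ ↓ 0`. -/
theorem stationary_increment_correlation {Ω : Type*} {mΩ : MeasurableSpace Ω}
    (μ : Measure Ω) [IsProbabilityMeasure μ]
    (H : ℝ) (hH : 0 < H ∧ H < 1/2)
    (Z : ℝ → Ω → ℝ) (γ c L : ℝ → ℝ)
    (hmean : ∀ t : ℝ, ∫ ω, Z t ω ∂μ = 0)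
    (hcov : ∀ s t : ℝ, ∫ ω, Z s ω * Z t ω ∂μ = c |t - s|)
    (hγ : ∀ s t : ℝ, ∫ ω, (Z (s + t) ω - Z s ω) ^ 2 ∂μ = γ t)
    (hLcont : ContinuousOn L (Set.Ioi 0))
    (hLslow : ∀ a : ℝ, 0 < a →
      Tendsto (fun t => L (a * t) / L t) (nhdsWithin 0 (Set.Ioi 0)) (nhds 1))
    (hasymp : Tendsto (fun t => γ t / (t ^ (2 * H) * L t)) (nhdsWithin 0 (Set.Ioi 0)) (nhds 1))
    (r : ℕ) (hr : 1 ≤ r) (i : ℕ) :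
    Tendsto
      (fun Δ : ℝ =>
        (∫ ω, (Z (((i:ℝ) + 1) * Δ) ω - Z ((i:ℝ) * Δ) ω) *
              (Z (((i:ℝ) + (r:ℝ) + 1) * Δ) ω - Z (((i:ℝ) + (r:ℝ)) * Δ) ω) ∂μ) /
          (Real.sqrt (γ Δ) * Real.sqrt (γ Δ)))
      (nhdsWithin 0 (Set.Ioi 0))
      (nhds ((((r:ℝ) + 1) ^ (2 * H) - 2 * (r:ℝ) ^ (2 * H) + ((r:ℝ) - 1) ^ (2 * H)) / 2)) := by
  obtain ⟨hH0, hH12⟩ := hH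
  have h2H : (0:ℝ) < 2 * H := by linarith
  have hγnn : ∀ t, 0 ≤ γ t := fun t =>
    (hγ 0 t) ▸ integral_nonneg (fun ω => sq_nonneg _)
  have hγzero : γ 0 = 0 := by
    have h := hγ 0 0
    simp at h
    exact h.symm
  have hr' : (1:ℝ) ≤ (r:ℝ) := by exact_mod_cast hr
  -- integrability from nonvanishing of γ
  have key : ∀ (t s s' : ℝ), s' = s + t → γ t ≠ 0 →
      Integrable (fun ω => (Z s' ω - Z s ω) ^ 2) μ ∧
        (∫ ω, (Z s' ω - Z s ω) ^ 2 ∂μ) = γ t := by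
    intro t s s' hs ht
    subst hs
    refine ⟨?_, hγ s t⟩
    by_contra h
    exact ht (by rw [← hγ s t, integral_undef h])
  -- the three limits
  have hterm1 : Tendsto (fun Δ => γ (((r:ℝ) + 1) * Δ) / γ Δ) (nhdsWithin 0 (Set.Ioi 0))
      (nhds (((r:ℝ) + 1) ^ (2 * H))) :=
    aux_ratio h2H hLslow hasymp (by linarith)
  have hterm2 : Tendsto (fun Δ => γ ((r:ℝ) * Δ) / γ Δ) (nhdsWithin 0 (Set.Ioi 0))
      (nhds ((r:ℝ) ^ (2 * H))) :=
    aux_ratio h2H hLslow hasymp (by linarith)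
  have hterm3 : Tendsto (fun Δ => γ (((r:ℝ) - 1) * Δ) / γ Δ) (nhdsWithin 0 (Set.Ioi 0))
      (nhds (((r:ℝ) - 1) ^ (2 * H))) := by
    rcases eq_or_lt_of_le hr' with h | h
    · rw [← h]
      simp only [sub_self, zero_mul, hγzero, zero_div]
      rw [Real.zero_rpow (ne_of_gt h2H)]
      exact tendsto_const_nhds
    · exact aux_ratio h2H hLslow hasymp (by linarith)
  have hmain : Tendsto (fun Δ => (γ (((r:ℝ) + 1) * Δ) / γ Δ - 2 * (γ ((r:ℝ) * Δ) / γ Δ)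
        + γ (((r:ℝ) - 1) * Δ) / γ Δ) / 2)
      (nhdsWithin 0 (Set.Ioi 0))
      (nhds ((((r:ℝ) + 1) ^ (2 * H) - 2 * (r:ℝ) ^ (2 * H) + ((r:ℝ) - 1) ^ (2 * H)) / 2)) :=
    ((hterm1.sub (hterm2.const_mul 2)).add hterm3).div_const 2
  apply hmain.congr'
  -- eventual nonvanishing facts
  have hne := aux_ne hasymp
  have hlast : ∀ᶠ Δ in nhdsWithin (0:ℝ) (Set.Ioi 0),
      ((r:ℝ) = 1 ∨ γ (((r:ℝ) - 1) * Δ) ≠ 0) := by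
    rcases eq_or_lt_of_le hr' with h | h
    · exact Eventually.of_forall fun Δ => Or.inl h.symm
    · filter_upwards [(aux_scale (by linarith : (0:ℝ) < (r:ℝ) - 1)).eventually hne] with Δ hΔ
      exact Or.inr hΔ.1
  filter_upwards [hne, (aux_scale (by linarith : (0:ℝ) < (r:ℝ))).eventually hne,
    (aux_scale (by linarith : (0:ℝ) < (r:ℝ) + 1)).eventually hne, hlast] with Δ hΔ hΔr hΔr1 hl
  obtain ⟨hγΔ, _, hΔpos⟩ := hΔ
  have hγr : γ ((r:ℝ) * Δ) ≠ 0 := hΔr.1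
  have hγr1 : γ (((r:ℝ) + 1) * Δ) ≠ 0 := hΔr1.1
  -- the four squared-increment integrals
  have k1 := key (((r:ℝ) + 1) * Δ) ((i:ℝ) * Δ) (((i:ℝ) + (r:ℝ) + 1) * Δ) (by ring) hγr1
  have k3 := key ((r:ℝ) * Δ) (((i:ℝ) + 1) * Δ) (((i:ℝ) + (r:ℝ) + 1) * Δ) (by ring) hγr
  have k4 := key ((r:ℝ) * Δ) ((i:ℝ) * Δ) (((i:ℝ) + (r:ℝ)) * Δ) (by ring) hγr
  have k2 : Integrable (fun ω => (Z (((i:ℝ) + (r:ℝ)) * Δ) ω - Z (((i:ℝ) + 1) * Δ) ω) ^ 2) μ ∧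
      (∫ ω, (Z (((i:ℝ) + (r:ℝ)) * Δ) ω - Z (((i:ℝ) + 1) * Δ) ω) ^ 2 ∂μ)
        = γ (((r:ℝ) - 1) * Δ) := by
    rcases hl with h | h
    · rw [h]
      simp [sub_self, hγzero]
    · exact key (((r:ℝ) - 1) * Δ) (((i:ℝ) + 1) * Δ) (((i:ℝ) + (r:ℝ)) * Δ) (by ring) h
  -- numerator computation via polarization
  have hnum : (∫ ω, (Z (((i:ℝ) + 1) * Δ) ω - Z ((i:ℝ) * Δ) ω) *
        (Z (((i:ℝ) + (r:ℝ) + 1) * Δ) ω - Z (((i:ℝ) + (r:ℝ)) * Δ) ω) ∂μ)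
      = (γ (((r:ℝ) + 1) * Δ) + γ (((r:ℝ) - 1) * Δ)
          - (γ ((r:ℝ) * Δ) + γ ((r:ℝ) * Δ))) / 2 := by
    calc (∫ ω, (Z (((i:ℝ) + 1) * Δ) ω - Z ((i:ℝ) * Δ) ω) *
            (Z (((i:ℝ) + (r:ℝ) + 1) * Δ) ω - Z (((i:ℝ) + (r:ℝ)) * Δ) ω) ∂μ)
        = ∫ ω, (((Z (((i:ℝ) + (r:ℝ) + 1) * Δ) ω - Z ((i:ℝ) * Δ) ω) ^ 2
              + (Z (((i:ℝ) + (r:ℝ)) * Δ) ω - Z (((i:ℝ) + 1) * Δ) ω) ^ 2)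
            - ((Z (((i:ℝ) + (r:ℝ)) * Δ) ω - Z ((i:ℝ) * Δ) ω) ^ 2
              + (Z (((i:ℝ) + (r:ℝ) + 1) * Δ) ω - Z (((i:ℝ) + 1) * Δ) ω) ^ 2)) / 2 ∂μ := by
          congr 1; funext ω; ring
      _ = ((∫ ω, ((Z (((i:ℝ) + (r:ℝ) + 1) * Δ) ω - Z ((i:ℝ) * Δ) ω) ^ 2
              + (Z (((i:ℝ) + (r:ℝ)) * Δ) ω - Z (((i:ℝ) + 1) * Δ) ω) ^ 2) ∂μ)
            - (∫ ω, ((Z (((i:ℝ) + (r:ℝ)) * Δ) ω - Z ((i:ℝ) * Δ) ω) ^ 2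
              + (Z (((i:ℝ) + (r:ℝ) + 1) * Δ) ω - Z (((i:ℝ) + 1) * Δ) ω) ^ 2) ∂μ)) / 2 := by
          rw [integral_div, integral_sub (by exact k1.1.add k2.1) (by exact k4.1.add k3.1)]
      _ = (γ (((r:ℝ) + 1) * Δ) + γ (((r:ℝ) - 1) * Δ)
            - (γ ((r:ℝ) * Δ) + γ ((r:ℝ) * Δ))) / 2 := by
          rw [integral_add (by exact k1.1) (by exact k2.1), integral_add (by exact k4.1) (by exact k3.1), k1.2, k2.2, k3.2, k4.2]
  rw [hnum, Real.mul_self_sqrt (hγnn Δ)]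
  field_simp
  ring
end
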